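/- arXiv:1905.01638 — 9 statements merged into one kernel-verified Lean document; each statement's English description precedes it below -/
import Mathlib

section
/- For any unit vector (v1,v2,v3) ∈ ℝ³ (i.e. v1²+v2²+v3² = 1), one has P(v1,v2,v3) ≤ 1/3, where P(v1,v2,v3) = -v2 v1² + (√3/2) v1 v3² + (1/3) v2³ + (1/2) v2 v3². Equivalently, 1 - 3P(v) ≥ 0 on the unit sphere. -/
/-!
With `u = (√3/2) v₁ + (1/2) v₂`, the inner product of `v` with the unit vector
`(√3/2, 1/2, 0)`, the cubic satisfies `3 P(v) = 3 u |v|² - 4 u³`. On the unit sphere this makes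
`1 - 3 P(v) = 4 u³ - 3 u + 1 = (u + 1) (2 u - 1)²`, which is nonnegative because
`u ≥ -1` by Cauchy–Schwarz.
-/

lemma three_mul_sub_four_mul_pow_three_le_one {u : ℝ} (hu : -1 ≤ u) :
    3 * u - 4 * u ^ 3 ≤ 1 := by
  nlinarith [mul_nonneg (neg_le_iff_add_nonneg.mp hu) (sq_nonneg (2 * u - 1))]

lemma neg_one_le_mul_add_mul {a b x y : ℝ} (hab : a ^ 2 + b ^ 2 = 1) (hxy : x ^ 2 + y ^ 2 ≤ 1) :
    -1 ≤ a * x + b * y := by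
  nlinarith [sq_nonneg (a + x), sq_nonneg (b + y)]

lemma three_mul_cubic_eq (v1 v2 v3 : ℝ) :
    3 * (-v2 * v1 ^ 2 + (√3 / 2) * v1 * v3 ^ 2 + (1 / 3) * v2 ^ 3 + (1 / 2) * v2 * v3 ^ 2) =
      3 * (√3 / 2 * v1 + 1 / 2 * v2) * (v1 ^ 2 + v2 ^ 2 + v3 ^ 2) -
        4 * (√3 / 2 * v1 + 1 / 2 * v2) ^ 3 := by
  linear_combination
    (v1 ^ 3 * √3 / 2 + 3 / 2 * v1 ^ 2 * v2) * Real.sq_sqrt (show (0 : ℝ) ≤ 3 by norm_num)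

/-- For any unit vector (v1,v2,v3) ∈ ℝ³, P(v1,v2,v3) ≤ 1/3, equivalently 1 - 3P(v) ≥ 0. -/
theorem P_le_third_on_sphere (P : ℝ → ℝ → ℝ → ℝ)
    (hP : ∀ v1 v2 v3 : ℝ, P v1 v2 v3 =
      -v2 * v1 ^ 2 + (Real.sqrt 3 / 2) * v1 * v3 ^ 2 + (1 / 3) * v2 ^ 3 + (1 / 2) * v2 * v3 ^ 2)
    (v1 v2 v3 : ℝ) (hunit : v1 ^ 2 + v2 ^ 2 + v3 ^ 2 = 1) :
    P v1 v2 v3 ≤ 1 / 3 ∧ 0 ≤ 1 - 3 * P v1 v2 v3 := by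
  have hu : -1 ≤ √3 / 2 * v1 + 1 / 2 * v2 :=
    neg_one_le_mul_add_mul (by norm_num [div_pow]) (by nlinarith [sq_nonneg v3])
  have h3P : 3 * P v1 v2 v3 =
      3 * (√3 / 2 * v1 + 1 / 2 * v2) - 4 * (√3 / 2 * v1 + 1 / 2 * v2) ^ 3 := by
    rw [hP, three_mul_cubic_eq, hunit, mul_one]
  have hbound := three_mul_sub_four_mul_pow_three_le_one hu
  constructor <;> linarith
end

section
/- Let u = (u1,u2,u3) ∈ ℝ³ with u1² + u2² + u3² = 1 and suppose P(u) = 1/3, where P(u) = -u2 u1² + (√3/2) u1 u3² + (1/3) u2³ + (1/2) u2 u3². Then (√3 u1 + u2)³ - 3(√3 u1 + u2) + 2 = 0, i.e. √3 u1 + u2 ∈ {1, -2}. -/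
/-! With `s = √3 v₁ + v₂`, the cubic `P` satisfies `6 P(v) = 3 s |v|² - s³` identically, so on the
unit sphere `P(u) = 1/3` says exactly that `s³ - 3 s + 2 = (s - 1)² (s + 2)` vanishes. -/

theorem cube_sub_three_mul_add_two_eq_zero_iff {x : ℝ} :
    x ^ 3 - 3 * x + 2 = 0 ↔ x = 1 ∨ x = -2 := by
  have hfactor : x ^ 3 - 3 * x + 2 = (x - 1) ^ 2 * (x + 2) := by ring
  rw [hfactor, mul_eq_zero, pow_eq_zero_iff two_ne_zero, sub_eq_zero, add_eq_zero_iff_eq_neg]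

theorem six_mul_P_eq (v1 v2 v3 : ℝ) :
    6 * (-v2 * v1 ^ 2 + (Real.sqrt 3 / 2) * v1 * v3 ^ 2 + (1 / 3) * v2 ^ 3 + (1 / 2) * v2 * v3 ^ 2) =
      3 * (Real.sqrt 3 * v1 + v2) * (v1 ^ 2 + v2 ^ 2 + v3 ^ 2) - (Real.sqrt 3 * v1 + v2) ^ 3 := by
  have h3 : Real.sqrt 3 ^ 2 = 3 := Real.sq_sqrt (by norm_num)
  linear_combination (Real.sqrt 3 * v1 ^ 3 + 3 * v1 ^ 2 * v2) * h3

/-- If |u| = 1 and P(u) = 1/3 then (√3 u1 + u2)³ - 3(√3 u1 + u2) + 2 = 0,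
    i.e. √3 u1 + u2 ∈ {1, -2}. -/
theorem cubic_of_maximal_P (P : ℝ → ℝ → ℝ → ℝ)
    (hP : ∀ v1 v2 v3 : ℝ, P v1 v2 v3 =
      -v2 * v1 ^ 2 + (Real.sqrt 3 / 2) * v1 * v3 ^ 2 + (1 / 3) * v2 ^ 3 + (1 / 2) * v2 * v3 ^ 2)
    (u1 u2 u3 : ℝ) (hunit : u1 ^ 2 + u2 ^ 2 + u3 ^ 2 = 1)
    (hmax : P u1 u2 u3 = 1 / 3) :
    (Real.sqrt 3 * u1 + u2) ^ 3 - 3 * (Real.sqrt 3 * u1 + u2) + 2 = 0 ∧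
      (Real.sqrt 3 * u1 + u2 = 1 ∨ Real.sqrt 3 * u1 + u2 = -2) := by
  have hcubic : (Real.sqrt 3 * u1 + u2) ^ 3 - 3 * (Real.sqrt 3 * u1 + u2) + 2 = 0 := by
    have hsix := six_mul_P_eq u1 u2 u3
    rw [← hP, hmax, hunit] at hsix
    linarith
  exact ⟨hcubic, cube_sub_three_mul_add_two_eq_zero_iff.mp hcubic⟩
end

section
/- Let u = (u1,u2,u3) be a unit vector in ℝ³ with u1 ≥ 0 satisfying P(u) = 1/3, where P is as below. Then √3 u1 + u2 = 1 (the alternative √3 u1 + u2 = -2 is excluded), and consequently (1 - (4/√3) u1)² + ((2/√3) u3)² = 1. -/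
/-!
With `s = √3 u₁ + u₂` (twice the inner product of `u` with the unit vector `(√3/2, 1/2, 0)`),
the cubic is `6 P(v) = 3 s |v|² - s³`. On the unit sphere `P(u) = 1/3` therefore reads
`s³ - 3 s + 2 = (s - 1)² (s + 2) = 0`, and `u₁ ≥ 0`, `u₂ ≥ -1` rule out the root `s = -2`.
Substituting `u₂ = 1 - √3 u₁` into `|u|² = 1` gives `u₃² = 2√3 u₁ - 4 u₁²`, which is the circle.
-/

open Real

lemma six_mul_cubic_eq (v1 v2 v3 : ℝ) :
    6 * (-v2 * v1 ^ 2 + (√3 / 2) * v1 * v3 ^ 2 + (1 / 3) * v2 ^ 3 + (1 / 2) * v2 * v3 ^ 2) =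
      3 * (√3 * v1 + v2) * (v1 ^ 2 + v2 ^ 2 + v3 ^ 2) - (√3 * v1 + v2) ^ 3 := by
  have h3 : √3 ^ 2 = 3 := sq_sqrt (by norm_num)
  linear_combination (√3 * v1 ^ 3 + 3 * v1 ^ 2 * v2) * h3

lemma eq_one_of_cube_sub_three_mul_add_two_eq_zero {s : ℝ} (h : s ^ 3 - 3 * s + 2 = 0)
    (hs : -2 < s) : s = 1 := by
  have hfactor : (s - 1) ^ 2 * (s + 2) = 0 := by linear_combination h
  have hsq : (s - 1) ^ 2 = 0 :=
    (mul_eq_zero.mp hfactor).resolve_right (by linarith)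
  linarith [pow_eq_zero_iff (n := 2) two_ne_zero |>.mp hsq]

lemma neg_one_le_sqrt_three_mul_add {u1 u2 u3 : ℝ} (hunit : u1 ^ 2 + u2 ^ 2 + u3 ^ 2 = 1)
    (hnonneg : 0 ≤ u1) : -1 ≤ √3 * u1 + u2 := by
  have hu2 : |u2| ≤ 1 := (sq_le_one_iff_abs_le_one u2).mp (by nlinarith [sq_nonneg u1, sq_nonneg u3])
  nlinarith [neg_abs_le u2, mul_nonneg (sqrt_nonneg 3) hnonneg]

lemma circle_of_sqrt_three_mul_add_eq_one {u1 u2 u3 : ℝ} (hunit : u1 ^ 2 + u2 ^ 2 + u3 ^ 2 = 1)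
    (hline : √3 * u1 + u2 = 1) :
    (1 - (4 / √3) * u1) ^ 2 + ((2 / √3) * u3) ^ 2 = 1 := by
  have h3 : √3 ^ 2 = 3 := sq_sqrt (by norm_num)
  have hu3 : u3 ^ 2 = 2 * √3 * u1 - 4 * u1 ^ 2 := by
    obtain rfl : u2 = 1 - √3 * u1 := by linarith
    linear_combination hunit - u1 ^ 2 * h3
  have hne : √3 ≠ 0 := by positivity
  field_simp
  linear_combination 4 * hu3

/-- If |u| = 1, u1 ≥ 0 and P(u) = 1/3 then √3 u1 + u2 = 1, and consequently
    (1 - (4/√3)u1)² + ((2/√3)u3)² = 1. -/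
theorem sqrt3u1_add_u2_eq_one (P : ℝ → ℝ → ℝ → ℝ)
    (hP : ∀ v1 v2 v3 : ℝ, P v1 v2 v3 =
      -v2 * v1 ^ 2 + (Real.sqrt 3 / 2) * v1 * v3 ^ 2 + (1 / 3) * v2 ^ 3 + (1 / 2) * v2 * v3 ^ 2)
    (u1 u2 u3 : ℝ) (hunit : u1 ^ 2 + u2 ^ 2 + u3 ^ 2 = 1)
    (hnonneg : 0 ≤ u1) (hmax : P u1 u2 u3 = 1 / 3) :
    Real.sqrt 3 * u1 + u2 = 1 ∧
      (1 - (4 / Real.sqrt 3) * u1) ^ 2 + ((2 / Real.sqrt 3) * u3) ^ 2 = 1 := by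
  have hcubic := six_mul_cubic_eq u1 u2 u3
  rw [← hP, hmax, hunit] at hcubic
  have hline : √3 * u1 + u2 = 1 :=
    eq_one_of_cube_sub_three_mul_add_two_eq_zero (by linear_combination hcubic)
      (by linarith [neg_one_le_sqrt_three_mul_add hunit hnonneg])
  exact ⟨hline, circle_of_sqrt_three_mul_add_eq_one hunit hline⟩
end

section
/- Given u = (u1,u2,u3) ∈ ℝ³, the three eigenvalues of the symmetric traceless 3×3 matrix Q[u] := u1 (e_ρ⊗e_ρ - (1/2)I₂) + (√3/2) u2 (e_z⊗e_z - (1/3)I₃) + (1/2) u3 (e_ρ⊗e_z + e_z⊗e_ρ) are λ1 = -(1/2)(u1 + u2/√3), λ± = (1/4)[(u1 + u2/√3) ± √((u1 - √3 u2)² + 4 u3²)], where e_ρ, e_θ, e_z is an orthonormal basis, I₂ = e_ρ⊗e_ρ + e_θ⊗e_θ, and I₃ is the identity. -/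
/-
Q[u] has no entries coupling e_θ to e_ρ or e_z, so its characteristic polynomial is
(X - Q_θθ) times that of the (ρ, z) block, and Q_θθ = λ1. Since u2/√3 = (√3 u2)/3, all entries
are polynomial in u1, √3 u2, u3, and λ± are the roots of the block's characteristic polynomial
because their sum is its trace and their product its determinant.
-/

open Matrix Polynomial

section

variable {R : Type*} [CommRing R]

theorem charpoly_fin_three_of_decoupled_middle (a b c d e : R) :
    (!![a, 0, b; 0, d, 0; c, 0, e] : Matrix (Fin 3) (Fin 3) R).charpoly =
      (X - C d) * ((X - C a) * (X - C e) - C (b * c)) := by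
  rw [charpoly, det_fin_three]
  simp only [charmatrix_apply_eq, charmatrix_apply_ne, ne_eq, Fin.reduceEq, not_false_eq_true,
    of_apply, cons_val', cons_val_zero, cons_val_one, cons_val_two, head_cons, tail_cons,
    empty_val', cons_val_fin_one, head_fin_const, map_zero, map_mul]
  ring

theorem X_sub_C_mul_X_sub_C_sub_C_eq {a e p r s : R} (hsum : r + s = a + e)
    (hprod : r * s = a * e - p) :
    (X - C a) * (X - C e) - C p = (X - C r) * (X - C s) := by
  have hsum' : C r + C s = C a + C e := by rw [← C_add, ← C_add, hsum]
  have hprod' : C r * C s = C a * C e - C p := by rw [← C_mul, ← C_mul, ← C_sub, hprod]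
  linear_combination X * hsum' - hprod'

end

/-- The eigenvalues of Q[u] = u1(e_ρ⊗e_ρ - ½I₂) + (√3/2)u2 M2 + (1/2)u3 M3 are
    λ1 = -(1/2)(u1 + u2/√3) and λ± = (1/4)[(u1 + u2/√3) ± √((u1-√3u2)² + 4u3²)]. -/
theorem eigenvalues_of_Q (u1 u2 u3 : ℝ)
    (eρ ez : Fin 3 → ℝ) (heρ : eρ = ![1, 0, 0]) (hez : ez = ![0, 0, 1])
    (I2 M2 M3 Q : Matrix (Fin 3) (Fin 3) ℝ)
    (hI2 : I2 = Matrix.diagonal ![1, 1, 0])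
    (hM2 : M2 = vecMulVec ez ez - (1 / 3 : ℝ) • (1 : Matrix (Fin 3) (Fin 3) ℝ))
    (hM3 : M3 = vecMulVec eρ ez + vecMulVec ez eρ)
    (hQ : Q = u1 • (vecMulVec eρ eρ - (1 / 2 : ℝ) • I2)
        + (Real.sqrt 3 / 2 * u2) • M2 + (u3 / 2) • M3) :
    Q.charpoly =
      (X - C (-(1 / 2) * (u1 + u2 / Real.sqrt 3))) *
      (X - C ((1 / 4) * ((u1 + u2 / Real.sqrt 3)
          + Real.sqrt ((u1 - Real.sqrt 3 * u2) ^ 2 + 4 * u3 ^ 2)))) *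
      (X - C ((1 / 4) * ((u1 + u2 / Real.sqrt 3)
          - Real.sqrt ((u1 - Real.sqrt 3 * u2) ^ 2 + 4 * u3 ^ 2)))) := by
  subst heρ hez hI2 hM2 hM3 hQ
  have hdiv : u2 / √3 = √3 * u2 / 3 := by
    field_simp
    rw [Real.sq_sqrt (by norm_num)]
  rw [hdiv]
  set w := √3 * u2
  have hQ_entries : u1 • (vecMulVec ![1, 0, 0] ![1, 0, 0] - (1 / 2 : ℝ) • diagonal ![1, 1, 0])
      + (√3 / 2 * u2) • (vecMulVec ![0, 0, 1] ![0, 0, 1] - (1 / 3 : ℝ) • 1)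
      + (u3 / 2) • (vecMulVec ![1, 0, 0] ![0, 0, 1] + vecMulVec ![0, 0, 1] ![1, 0, 0])
      = !![(u1 - w / 3) / 2, 0, u3 / 2; 0, -(1 / 2) * (u1 + w / 3), 0; u3 / 2, 0, w / 3] := by
    ext i j
    fin_cases i <;> fin_cases j <;> simp [w, one_apply] <;> ring
  rw [hQ_entries, charpoly_fin_three_of_decoupled_middle, mul_assoc, X_sub_C_mul_X_sub_C_sub_C_eq]
  · ring
  · have hD := Real.sq_sqrt (by positivity : 0 ≤ (u1 - w) ^ 2 + 4 * u3 ^ 2)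
    linear_combination (-1 / 16) * hD
end

section
/- Let u = (u1,u2,u3) ∈ ℝ³ be a unit vector with u1 > 0 and u3 = 0. Then the matrix Q[u] (as defined in the context) has a repeated eigenvalue (i.e. is uniaxial) if and only if u = (√3/2, 1/2, 0) or u = (√3/2, -1/2, 0). -/
/-!
With `u3 = 0` the discriminant is `|u1 - √3 u2|`, so the eigenvalues are `-a/2` and `(a ± d)/4`
with `a = u1 + u2/√3`, `d = |u1 - √3 u2|`. Such a triple is uniaxial exactly when `a ≠ 0` and
`d ∈ {0, 3|a|}`. On the right half of the unit circle, `d = 0` is the line `u1 = √3 u2` and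
`d = 3|a|` reduces to `u1 (u1 + √3 u2) = 0`, i.e. the line `u1 = -√3 u2`; each line meets the
half circle in one of the two points, where `a > 0`.
-/

open Real

def IsUniaxial (l1 l2 l3 : ℝ) : Prop :=
  (l1 = l2 ∧ l1 ≠ l3 ∧ l1 ≠ 0) ∨ (l1 = l3 ∧ l1 ≠ l2 ∧ l1 ≠ 0) ∨ (l2 = l3 ∧ l2 ≠ l1 ∧ l2 ≠ 0)

theorem isUniaxial_eigenvalues_iff (a d : ℝ) :
    IsUniaxial (-(1 / 2) * a) (1 / 4 * (a - d)) (1 / 4 * (a + d)) ↔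
      a ≠ 0 ∧ (d = 0 ∨ d ^ 2 = (3 * a) ^ 2) := by
  rw [sq_eq_sq_iff_eq_or_eq_neg]
  constructor
  · rintro (⟨h12, -, h1⟩ | ⟨h13, -, h1⟩ | ⟨h23, -, h2⟩)
    · exact ⟨by simpa using h1, Or.inr (Or.inl (by linarith))⟩
    · exact ⟨by simpa using h1, Or.inr (Or.inr (by linarith))⟩
    · refine ⟨fun ha => h2 ?_, Or.inl (by linarith)⟩
      rw [ha, show d = 0 by linarith]; ring
  · rintro ⟨ha, rfl | rfl | rfl⟩
    · right; right
      refine ⟨by ring, fun h => ha ?_, fun h => ha ?_⟩ <;> linarith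
    · left
      refine ⟨by ring, fun h => ha ?_, fun h => ha ?_⟩ <;> linarith
    · right; left
      refine ⟨by ring, fun h => ha ?_, fun h => ha ?_⟩ <;> linarith

theorem eq_sqrt_three_mul_iff_of_sq_add_sq_eq_one {u1 u2 ε : ℝ} (hε : ε ^ 2 = 1)
    (hunit : u1 ^ 2 + u2 ^ 2 = 1) (hpos : 0 < u1) :
    u1 = ε * √3 * u2 ↔ u1 = √3 / 2 ∧ u2 = ε / 2 := by
  have h3 : √3 ^ 2 = 3 := sq_sqrt (by norm_num)
  constructor
  · intro h
    have hu1 : u1 = √3 / 2 := by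
      have hsq : u1 ^ 2 = (√3 / 2) ^ 2 := by
        have : u2 ^ 2 = 1 / 4 := by
          rw [h] at hunit
          linear_combination (1 / 4) * hunit - (3 / 4 * u2 ^ 2) * hε - (ε ^ 2 * u2 ^ 2 / 4) * h3
        nlinarith
      exact (sq_eq_sq₀ hpos.le (by positivity)).1 hsq
    refine ⟨hu1, ?_⟩
    have : √3 * u2 = √3 * (ε / 2) := by
      linear_combination (-ε) * h + ε * hu1 - (√3 * u2) * hε
    exact mul_left_cancel₀ (by positivity) this
  · rintro ⟨rfl, rfl⟩
    linear_combination (-(√3) / 2) * hε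

theorem uniaxial_condition_iff {u1 u2 : ℝ} (hunit : u1 ^ 2 + u2 ^ 2 = 1) (hpos : 0 < u1) :
    (u1 + u2 / √3 ≠ 0 ∧ (|u1 - √3 * u2| = 0 ∨ |u1 - √3 * u2| ^ 2 = (3 * (u1 + u2 / √3)) ^ 2)) ↔
      (u1 = √3 / 2 ∧ u2 = 1 / 2) ∨ (u1 = √3 / 2 ∧ u2 = -(1 / 2)) := by
  have h3 : √3 ^ 2 = 3 := sq_sqrt (by norm_num)
  have hline : |u1 - √3 * u2| = 0 ↔ u1 = 1 * √3 * u2 := by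
    rw [abs_eq_zero, sub_eq_zero, one_mul]
  have hcone : |u1 - √3 * u2| ^ 2 = (3 * (u1 + u2 / √3)) ^ 2 ↔ u1 = -1 * √3 * u2 := by
    have : (3 * (u1 + u2 / √3)) ^ 2 - |u1 - √3 * u2| ^ 2 = 8 * u1 * (u1 + √3 * u2) := by
      rw [sq_abs]; field_simp; linear_combination (-6 * √3 * u1 * u2 - u2 ^ 2 * (√3 ^ 2 + 3)) * h3
    rw [← sub_eq_zero, ← neg_eq_zero, neg_sub, this]
    constructor
    · intro h; nlinarith [mul_eq_zero.1 h]
    · intro h; rw [h]; ring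
  rw [hline, hcone, eq_sqrt_three_mul_iff_of_sq_add_sq_eq_one (by norm_num) hunit hpos,
    eq_sqrt_three_mul_iff_of_sq_add_sq_eq_one (by norm_num) hunit hpos, neg_div]
  constructor
  · exact fun h => h.2
  · refine fun h => ⟨?_, h⟩
    rcases h with ⟨rfl, rfl⟩ | ⟨rfl, rfl⟩
    · positivity
    · field_simp; rw [h3]; norm_num

/-- For a unit vector u with u1 > 0 and u3 = 0, the matrix Q[u] (whose eigenvalues are
    λ1 = -(1/2)(u1 + u2/√3) and λ± = (1/4)[(u1 + u2/√3) ± √((u1-√3u2)² + 4u3²)]) is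
    uniaxial (exactly two of the three eigenvalues coincide and are nonzero) if and only if
    u = (√3/2, 1/2, 0) or u = (√3/2, -1/2, 0). -/
theorem uniaxial_iff (u1 u2 u3 : ℝ)
    (hunit : u1 ^ 2 + u2 ^ 2 + u3 ^ 2 = 1) (hpos : 0 < u1) (hu3 : u3 = 0)
    (lam1 lam2 lam3 : ℝ)
    (hlam1 : lam1 = -(1 / 2) * (u1 + u2 / Real.sqrt 3))
    (hlam2 : lam2 = (1 / 4) * ((u1 + u2 / Real.sqrt 3)
        - Real.sqrt ((u1 - Real.sqrt 3 * u2) ^ 2 + 4 * u3 ^ 2)))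
    (hlam3 : lam3 = (1 / 4) * ((u1 + u2 / Real.sqrt 3)
        + Real.sqrt ((u1 - Real.sqrt 3 * u2) ^ 2 + 4 * u3 ^ 2))) :
    ((lam1 = lam2 ∧ lam1 ≠ lam3 ∧ lam1 ≠ 0) ∨
     (lam1 = lam3 ∧ lam1 ≠ lam2 ∧ lam1 ≠ 0) ∨
     (lam2 = lam3 ∧ lam2 ≠ lam1 ∧ lam2 ≠ 0)) ↔
      ((u1, u2, u3) = (Real.sqrt 3 / 2, 1 / 2, 0) ∨
       (u1, u2, u3) = (Real.sqrt 3 / 2, -(1 / 2), 0)) := by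
  subst hu3 hlam1 hlam2 hlam3
  have hdisc : Real.sqrt ((u1 - √3 * u2) ^ 2 + 4 * 0 ^ 2) = |u1 - √3 * u2| := by
    rw [zero_pow two_ne_zero, mul_zero, add_zero, sqrt_sq_eq_abs]
  rw [zero_pow two_ne_zero, add_zero] at hunit
  rw [hdisc]
  simp only [Prod.mk.injEq, and_true]
  exact (isUniaxial_eigenvalues_iff _ _).trans (uniaxial_condition_iff hunit hpos)
end

section
/- For a smooth curve v : [0,π] → S² ⊂ ℝ³ solving the ODE system -(sin φ · v')' + (1/sin φ)·(4v1, 0, v3) = (|v'|² sin φ + (4v1² + v3²)/sin φ)·v on (0,π), with v1(0) = v3(0) = 0, the quantity |v'(φ)|² sin²φ - (4 v1(φ)² + v3(φ)²) is constant on [0,π], and hence equals 0, i.e. |v'|² sin²φ = 4v1² + v3² on [0,π]. -/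
open Real Set Filter Topology

/-- For a smooth S²-valued solution v of the ODE system
    -(sin φ v_j')' + (c_j/sin φ) v_j = (|v'|² sin φ + (4v1² + v3²)/sin φ) v_j on (0,π)
    (c₁ = 4, c₂ = 0, c₃ = 1) with v1(0) = v3(0) = 0, the quantity
    |v'|² sin²φ - (4v1² + v3²) is constant on [0,π] and hence vanishes, i.e.
    |v'|² sin²φ = 4v1² + v3² on [0,π]. -/
theorem pohozaev_identity (v1 v2 v3 : ℝ → ℝ)
    (hv1 : ContDiffOn ℝ (⊤ : ℕ∞) v1 (Icc 0 π)) (hv2 : ContDiffOn ℝ (⊤ : ℕ∞) v2 (Icc 0 π))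
    (hv3 : ContDiffOn ℝ (⊤ : ℕ∞) v3 (Icc 0 π))
    (hunit : ∀ φ ∈ Icc (0 : ℝ) π, v1 φ ^ 2 + v2 φ ^ 2 + v3 φ ^ 2 = 1)
    (hODE1 : ∀ φ ∈ Ioo (0 : ℝ) π,
      -(deriv (fun x => Real.sin x * deriv v1 x) φ) + (4 / Real.sin φ) * v1 φ =
        (((deriv v1 φ) ^ 2 + (deriv v2 φ) ^ 2 + (deriv v3 φ) ^ 2) * Real.sin φ
          + (4 * v1 φ ^ 2 + v3 φ ^ 2) / Real.sin φ) * v1 φ)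
    (hODE2 : ∀ φ ∈ Ioo (0 : ℝ) π,
      -(deriv (fun x => Real.sin x * deriv v2 x) φ) =
        (((deriv v1 φ) ^ 2 + (deriv v2 φ) ^ 2 + (deriv v3 φ) ^ 2) * Real.sin φ
          + (4 * v1 φ ^ 2 + v3 φ ^ 2) / Real.sin φ) * v2 φ)
    (hODE3 : ∀ φ ∈ Ioo (0 : ℝ) π,
      -(deriv (fun x => Real.sin x * deriv v3 x) φ) + (1 / Real.sin φ) * v3 φ =
        (((deriv v1 φ) ^ 2 + (deriv v2 φ) ^ 2 + (deriv v3 φ) ^ 2) * Real.sin φ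
          + (4 * v1 φ ^ 2 + v3 φ ^ 2) / Real.sin φ) * v3 φ)
    (hbc1 : v1 0 = 0) (hbc3 : v3 0 = 0) :
    (∃ C : ℝ, ∀ φ ∈ Icc (0 : ℝ) π,
        ((deriv v1 φ) ^ 2 + (deriv v2 φ) ^ 2 + (deriv v3 φ) ^ 2) * Real.sin φ ^ 2
          - (4 * v1 φ ^ 2 + v3 φ ^ 2) = C) ∧
    (∀ φ ∈ Icc (0 : ℝ) π,
        ((deriv v1 φ) ^ 2 + (deriv v2 φ) ^ 2 + (deriv v3 φ) ^ 2) * Real.sin φ ^ 2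
          = 4 * v1 φ ^ 2 + v3 φ ^ 2) := by
  have hpi : (0:ℝ) < π := Real.pi_pos
  have hUD : UniqueDiffOn ℝ (Icc (0:ℝ) π) := uniqueDiffOn_Icc hpi
  have hnhds : ∀ x ∈ Ioo (0:ℝ) π, Icc (0:ℝ) π ∈ 𝓝 x := fun x hx => Icc_mem_nhds hx.1 hx.2
  -- differentiability of v_j at interior points
  have hd1 : ∀ x ∈ Ioo (0:ℝ) π, DifferentiableAt ℝ v1 x := fun x hx =>
    (hv1.differentiableOn (by simp) x (Ioo_subset_Icc_self hx)).differentiableAt (hnhds x hx)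
  have hd2 : ∀ x ∈ Ioo (0:ℝ) π, DifferentiableAt ℝ v2 x := fun x hx =>
    (hv2.differentiableOn (by simp) x (Ioo_subset_Icc_self hx)).differentiableAt (hnhds x hx)
  have hd3 : ∀ x ∈ Ioo (0:ℝ) π, DifferentiableAt ℝ v3 x := fun x hx =>
    (hv3.differentiableOn (by simp) x (Ioo_subset_Icc_self hx)).differentiableAt (hnhds x hx)
  -- derivWithin agrees with deriv on the interior
  have hwd1 : ∀ x ∈ Ioo (0:ℝ) π, derivWithin v1 (Icc 0 π) x = deriv v1 x := fun x hx =>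
    derivWithin_of_mem_nhds (hnhds x hx)
  have hwd2 : ∀ x ∈ Ioo (0:ℝ) π, derivWithin v2 (Icc 0 π) x = deriv v2 x := fun x hx =>
    derivWithin_of_mem_nhds (hnhds x hx)
  have hwd3 : ∀ x ∈ Ioo (0:ℝ) π, derivWithin v3 (Icc 0 π) x = deriv v3 x := fun x hx =>
    derivWithin_of_mem_nhds (hnhds x hx)
  -- deriv v_j is differentiable at interior points
  have hdd1 : ∀ x ∈ Ioo (0:ℝ) π, DifferentiableAt ℝ (deriv v1) x := fun x hx =>
    ((((hv1.mono Ioo_subset_Icc_self).deriv_of_isOpen isOpen_Ioo (m := 1)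
      (by norm_cast)).differentiableOn one_ne_zero) x hx).differentiableAt (isOpen_Ioo.mem_nhds hx)
  have hdd2 : ∀ x ∈ Ioo (0:ℝ) π, DifferentiableAt ℝ (deriv v2) x := fun x hx =>
    ((((hv2.mono Ioo_subset_Icc_self).deriv_of_isOpen isOpen_Ioo (m := 1)
      (by norm_cast)).differentiableOn one_ne_zero) x hx).differentiableAt (isOpen_Ioo.mem_nhds hx)
  have hdd3 : ∀ x ∈ Ioo (0:ℝ) π, DifferentiableAt ℝ (deriv v3) x := fun x hx =>
    ((((hv3.mono Ioo_subset_Icc_self).deriv_of_isOpen isOpen_Ioo (m := 1)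
      (by norm_cast)).differentiableOn one_ne_zero) x hx).differentiableAt (isOpen_Ioo.mem_nhds hx)
  -- the key quantity
  set G : ℝ → ℝ := fun x => (Real.sin x * deriv v1 x)^2 + (Real.sin x * deriv v2 x)^2
      + (Real.sin x * deriv v3 x)^2 - (4 * v1 x^2 + v3 x^2) with hGdef
  -- G has zero derivative on the interior
  have hG' : ∀ x ∈ Ioo (0:ℝ) π, HasDerivAt G 0 x := by
    intro x hx
    have hs : Real.sin x ≠ 0 := ne_of_gt (Real.sin_pos_of_pos_of_lt_pi hx.1 hx.2)
    have hW1 : DifferentiableAt ℝ (fun y => Real.sin y * deriv v1 y) x :=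
      (Real.differentiable_sin x).mul (hdd1 x hx)
    have hW2 : DifferentiableAt ℝ (fun y => Real.sin y * deriv v2 y) x :=
      (Real.differentiable_sin x).mul (hdd2 x hx)
    have hW3 : DifferentiableAt ℝ (fun y => Real.sin y * deriv v3 y) x :=
      (Real.differentiable_sin x).mul (hdd3 x hx)
    -- dot product vanishes
    have hdot : v1 x * deriv v1 x + v2 x * deriv v2 x + v3 x * deriv v3 x = 0 := by
      have hq : HasDerivAt (fun y => v1 y^2 + v2 y^2 + v3 y^2)
          (2 * v1 x ^ 1 * deriv v1 x + 2 * v2 x ^ 1 * deriv v2 x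
            + 2 * v3 x ^ 1 * deriv v3 x) x := by
        exact (((hd1 x hx).hasDerivAt.pow 2).add ((hd2 x hx).hasDerivAt.pow 2)).add
          ((hd3 x hx).hasDerivAt.pow 2)
      have hq0 : HasDerivAt (fun y => v1 y^2 + v2 y^2 + v3 y^2) 0 x := by
        refine (hasDerivAt_const x (1:ℝ)).congr_of_eventuallyEq ?_
        exact Filter.eventuallyEq_of_mem (hnhds x hx) (fun y hy => hunit y hy)
      have := hq.unique hq0
      simp only [pow_one] at this
      linarith
    -- the derivative of G
    have hGd : HasDerivAt G
        (2 * (Real.sin x * deriv v1 x) ^ 1 * deriv (fun y => Real.sin y * deriv v1 y) x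
          + 2 * (Real.sin x * deriv v2 x) ^ 1 * deriv (fun y => Real.sin y * deriv v2 y) x
          + 2 * (Real.sin x * deriv v3 x) ^ 1 * deriv (fun y => Real.sin y * deriv v3 y) x
          - (4 * (2 * v1 x ^ 1 * deriv v1 x) + 2 * v3 x ^ 1 * deriv v3 x)) x := by
      exact (((hW1.hasDerivAt.pow 2).add (hW2.hasDerivAt.pow 2)).add
        (hW3.hasDerivAt.pow 2)).sub
        ((((hd1 x hx).hasDerivAt.pow 2).const_mul 4).add ((hd3 x hx).hasDerivAt.pow 2))
    have key : 2 * (Real.sin x * deriv v1 x) ^ 1 * deriv (fun y => Real.sin y * deriv v1 y) x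
          + 2 * (Real.sin x * deriv v2 x) ^ 1 * deriv (fun y => Real.sin y * deriv v2 y) x
          + 2 * (Real.sin x * deriv v3 x) ^ 1 * deriv (fun y => Real.sin y * deriv v3 y) x
          - (4 * (2 * v1 x ^ 1 * deriv v1 x) + 2 * v3 x ^ 1 * deriv v3 x) = 0 := by
      have h1 := hODE1 x hx
      have h2 := hODE2 x hx
      have h3 := hODE3 x hx
      set L : ℝ := ((deriv v1 x) ^ 2 + (deriv v2 x) ^ 2 + (deriv v3 x) ^ 2) * Real.sin x
          + (4 * v1 x ^ 2 + v3 x ^ 2) / Real.sin x with hLdef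
      have e1 : deriv (fun y => Real.sin y * deriv v1 y) x = (4 / Real.sin x) * v1 x - L * v1 x := by
        linarith
      have e2 : deriv (fun y => Real.sin y * deriv v2 y) x = - (L * v2 x) := by
        linarith
      have e3 : deriv (fun y => Real.sin y * deriv v3 y) x = (1 / Real.sin x) * v3 x - L * v3 x := by
        linarith
      rw [e1, e2, e3]
      simp only [pow_one]
      linear_combination (-2 * Real.sin x * L) * hdot
        + (8 * deriv v1 x * v1 x + 2 * deriv v3 x * v3 x) * (mul_inv_cancel₀ hs)
    rw [← key]
    exact hGd
  -- G is constant on the open interval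
  have hx0 : π/2 ∈ Ioo (0:ℝ) π := ⟨by positivity, by linarith⟩
  have hconst : ∀ x ∈ Ioo (0:ℝ) π, G x = G (π/2) := by
    intro x hx
    rcases le_total x (π/2) with h | h
    · have hsub : Icc x (π/2) ⊆ Ioo (0:ℝ) π := Icc_subset_Ioo hx.1 hx0.2
      have hcont : ContinuousOn G (Icc x (π/2)) := fun y hy =>
        ((hG' y (hsub hy)).differentiableAt.continuousAt).continuousWithinAt
      have := constant_of_has_deriv_right_zero hcont
        (fun y hy => (hG' y (hsub (Ico_subset_Icc_self hy))).hasDerivWithinAt)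
      exact (this (π/2) (right_mem_Icc.mpr h)).symm
    · have hsub : Icc (π/2) x ⊆ Ioo (0:ℝ) π := Icc_subset_Ioo hx0.1 hx.2
      have hcont : ContinuousOn G (Icc (π/2) x) := fun y hy =>
        ((hG' y (hsub hy)).differentiableAt.continuousAt).continuousWithinAt
      have := constant_of_has_deriv_right_zero hcont
        (fun y hy => (hG' y (hsub (Ico_subset_Icc_self hy))).hasDerivWithinAt)
      exact this x (right_mem_Icc.mpr h)
  -- continuous extension to the closed interval
  set F : ℝ → ℝ := fun x => (Real.sin x * derivWithin v1 (Icc 0 π) x)^2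
      + (Real.sin x * derivWithin v2 (Icc 0 π) x)^2
      + (Real.sin x * derivWithin v3 (Icc 0 π) x)^2 - (4 * v1 x^2 + v3 x^2) with hFdef
  have hFcont : ContinuousOn F (Icc (0:ℝ) π) := by
    have h1 := hv1.continuousOn_derivWithin hUD (by simp)
    have h2 := hv2.continuousOn_derivWithin hUD (by simp)
    have h3 := hv3.continuousOn_derivWithin hUD (by simp)
    have hc1 : ContinuousOn v1 (Icc (0:ℝ) π) := hv1.continuousOn
    have hc3 : ContinuousOn v3 (Icc (0:ℝ) π) := hv3.continuousOn
    exact ((((Real.continuous_sin.continuousOn.mul h1).pow 2).add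
      ((Real.continuous_sin.continuousOn.mul h2).pow 2)).add
      ((Real.continuous_sin.continuousOn.mul h3).pow 2)).sub
      (((hc1.pow 2).const_smul (4:ℝ)).add (hc3.pow 2)) |>.congr (fun x _ => by simp only [hFdef, smul_eq_mul, Pi.add_apply, Pi.sub_apply, Pi.mul_apply, Pi.pow_apply, Pi.smul_apply])
  have hFeq : EqOn F (fun _ => G (π/2)) (Icc (0:ℝ) π) := by
    have heq : EqOn F (fun _ => G (π/2)) (Ioo (0:ℝ) π) := by
      intro x hx
      have : F x = G x := by
        simp only [hFdef, hGdef, hwd1 x hx, hwd2 x hx, hwd3 x hx]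
      rw [this]
      exact hconst x hx
    exact heq.of_subset_closure hFcont continuousOn_const Ioo_subset_Icc_self
      (by rw [closure_Ioo hpi.ne])
  -- value of the constant
  have hc0 : G (π/2) = 0 := by
    have := hFeq (left_mem_Icc.mpr hpi.le)
    simp only [hFdef] at this
    rw [Real.sin_zero, hbc1, hbc3] at this
    simpa using this.symm
  have hpiend : 4 * v1 π ^ 2 + v3 π ^ 2 = 0 := by
    have := hFeq (right_mem_Icc.mpr hpi.le)
    simp only [hFdef, hc0] at this
    rw [Real.sin_pi] at this
    linarith [this]
  -- the final identity
  have key : ∀ φ ∈ Icc (0:ℝ) π,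
      ((deriv v1 φ) ^ 2 + (deriv v2 φ) ^ 2 + (deriv v3 φ) ^ 2) * Real.sin φ ^ 2
        - (4 * v1 φ ^ 2 + v3 φ ^ 2) = 0 := by
    intro φ hφ
    rcases eq_or_lt_of_le hφ.1 with h0 | h0
    · rw [← h0, Real.sin_zero, hbc1, hbc3]; ring
    rcases eq_or_lt_of_le hφ.2 with hπe | hπl
    · rw [hπe, Real.sin_pi]
      nlinarith [hpiend]
    · have hx : φ ∈ Ioo (0:ℝ) π := ⟨h0, hπl⟩
      have hGφ : G φ = 0 := (hconst φ hx).trans hc0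
      simp only [hGdef] at hGφ
      nlinarith [hGφ]
  exact ⟨⟨0, fun φ hφ => key φ hφ⟩, fun φ hφ => by have := key φ hφ; linarith⟩
end

section
/- For any β1 ∈ (0,π), the pair of functions v2(φ) = (cos β1 + cos φ)/(1 + cos β1 cos φ), v3(φ) = (sin β1 sin φ)/(1 + cos β1 cos φ) satisfies v2² + v3² = 1 on [0,π], and the angle α = arccos v2 solves α' = sin α / sin φ on (0,π). -/
open Real Set

/-- For β1 ∈ (0,π), the pair v2(φ) = (cos β1 + cos φ)/(1 + cos β1 cos φ),
    v3(φ) = (sin β1 sin φ)/(1 + cos β1 cos φ) satisfies v2² + v3² = 1 on [0,π],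
    and α = arccos v2 solves α' = sin α / sin φ on (0,π). -/
theorem classII_harmonic_map (β1 : ℝ) (hβ1 : β1 ∈ Ioo 0 π)
    (v2 v3 α : ℝ → ℝ)
    (hv2 : v2 = fun φ => (Real.cos β1 + Real.cos φ) / (1 + Real.cos β1 * Real.cos φ))
    (hv3 : v3 = fun φ => (Real.sin β1 * Real.sin φ) / (1 + Real.cos β1 * Real.cos φ))
    (hα : α = fun φ => Real.arccos (v2 φ)) :
    (∀ φ ∈ Icc (0 : ℝ) π, v2 φ ^ 2 + v3 φ ^ 2 = 1) ∧
      (∀ φ ∈ Ioo (0 : ℝ) π, deriv α φ = Real.sin (α φ) / Real.sin φ) := by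
  have hs : 0 < Real.sin β1 := Real.sin_pos_of_pos_of_lt_pi hβ1.1 hβ1.2
  have hc1 : -1 < Real.cos β1 := by
    nlinarith [Real.sin_sq_add_cos_sq β1, Real.neg_one_le_cos β1]
  have hc2 : Real.cos β1 < 1 := by
    nlinarith [Real.sin_sq_add_cos_sq β1, Real.cos_le_one β1]
  have hD : ∀ φ : ℝ, 0 < 1 + Real.cos β1 * Real.cos φ := by
    intro φ
    rcases le_or_gt 0 (Real.cos φ) with h | h
    · nlinarith [Real.cos_le_one φ]
    · nlinarith [Real.neg_one_le_cos φ]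
  have hsum : ∀ φ : ℝ, v2 φ ^ 2 + v3 φ ^ 2 = 1 := by
    intro φ
    have hDφ := (hD φ).ne'
    rw [hv2, hv3]
    field_simp
    nlinarith [Real.sin_sq_add_cos_sq β1, Real.sin_sq_add_cos_sq φ]
  refine ⟨fun φ _ => hsum φ, fun φ hφ => ?_⟩
  have hsφ : 0 < Real.sin φ := Real.sin_pos_of_pos_of_lt_pi hφ.1 hφ.2
  have hDφ : 0 < 1 + Real.cos β1 * Real.cos φ := hD φ
  have hv3pos : 0 < v3 φ := by
    rw [hv3]; exact div_pos (mul_pos hs hsφ) hDφ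
  have hv2sq : v2 φ ^ 2 < 1 := by nlinarith [hsum φ]
  have hne1 : v2 φ ≠ 1 := by nlinarith [sq_nonneg (v2 φ - 1)]
  have hnem1 : v2 φ ≠ -1 := by nlinarith [sq_nonneg (v2 φ + 1)]
  -- derivative of v2
  have hnum : HasDerivAt (fun t => Real.cos β1 + Real.cos t) (-Real.sin φ) φ :=
    (Real.hasDerivAt_cos φ).const_add _
  have hden : HasDerivAt (fun t => 1 + Real.cos β1 * Real.cos t)
      (Real.cos β1 * -Real.sin φ) φ :=
    ((Real.hasDerivAt_cos φ).const_mul _).const_add 1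
  have hv2' : HasDerivAt v2
      ((-Real.sin φ * (1 + Real.cos β1 * Real.cos φ) -
        (Real.cos β1 + Real.cos φ) * (Real.cos β1 * -Real.sin φ)) /
        (1 + Real.cos β1 * Real.cos φ) ^ 2) φ := by
    rw [hv2]; exact hnum.div hden hDφ.ne'
  have hα' : HasDerivAt α
      (-(1 / Real.sqrt (1 - v2 φ ^ 2)) *
        ((-Real.sin φ * (1 + Real.cos β1 * Real.cos φ) -
          (Real.cos β1 + Real.cos φ) * (Real.cos β1 * -Real.sin φ)) /
          (1 + Real.cos β1 * Real.cos φ) ^ 2)) φ := by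
    rw [hα]
    exact (Real.hasDerivAt_arccos hnem1 hne1).comp φ hv2'
  have hsqrt : Real.sqrt (1 - v2 φ ^ 2) = v3 φ := by
    rw [show (1 : ℝ) - v2 φ ^ 2 = v3 φ ^ 2 by linarith [hsum φ], Real.sqrt_sq hv3pos.le]
  rw [hα'.deriv]
  simp only [hα, Real.sin_arccos, hsqrt, hv3]
  have hDne := hDφ.ne'
  field_simp
  nlinarith [Real.sin_sq_add_cos_sq β1, mul_pos hsφ hDφ, mul_pos hs hsφ,
    sq_nonneg (Real.sin φ * (1 + Real.cos β1 * Real.cos φ))]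
end

section
/- Let u : [0,π] → S² ⊂ ℝ³ be absolutely continuous with |u| ≡ 1 and finite energy E₂[u] = ∫₀^π e₂[u] with e₂[u] = |u'|² sin φ + (4u1² + u3²)/sin φ. Then for all 0 ≤ φ1 < φ2 ≤ π: |u2(φ2) - u2(φ1)| ≤ ∫_{φ1}^{φ2} e₂[u]. -/
open Real Set MeasureTheory

/-!
On the unit sphere `u ⬝ u' = 0`, so `u2 u2' = -(u1 u1' + u3 u3')` and Cauchy–Schwarz gives
`u2'² ≤ (u1² + u3²) |u'|²`. AM-GM with weights `sin φ` and `1 / sin φ` then bounds `|u2'|` by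
`e₂[u]` pointwise on `(0, π)`, and integrating this bound yields the oscillation estimate.
-/

/-- `deriv f` need not be integrable: the one-sided FTC inequality only asks for an integrable
majorant of the derivative. -/
lemma abs_sub_le_integral_of_abs_deriv_le {f g : ℝ → ℝ} {a b : ℝ} (hab : a ≤ b)
    (hf : ContinuousOn f (Icc a b)) (hdf : ∀ x ∈ Ioo a b, DifferentiableAt ℝ f x)
    (hg : IntegrableOn g (Icc a b)) (hfg : ∀ x ∈ Ioo a b, |deriv f x| ≤ g x) :
    |f b - f a| ≤ ∫ x in a..b, g x := by
  have hderiv x (hx : x ∈ Ioo a b) := (hdf x hx).hasDerivAt.hasDerivWithinAt (s := Ioi x)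
  refine abs_le'.2 ⟨?_, ?_⟩
  · exact intervalIntegral.sub_le_integral_of_hasDeriv_right_of_le hab hf hderiv hg
      fun x hx => (le_abs_self _).trans (hfg x hx)
  · have := intervalIntegral.sub_le_integral_of_hasDeriv_right_of_le hab hf.neg
      (fun x hx => (hderiv x hx).neg) hg fun x hx => (neg_le_abs _).trans (hfg x hx)
    simp only [Pi.neg_apply] at this
    linarith

lemma inner_deriv_eq_zero_of_sum_sq_eventually_eq_one {u1 u2 u3 : ℝ → ℝ} {φ : ℝ}
    (hd1 : DifferentiableAt ℝ u1 φ) (hd2 : DifferentiableAt ℝ u2 φ)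
    (hd3 : DifferentiableAt ℝ u3 φ)
    (hunit : ∀ᶠ x in nhds φ, u1 x ^ 2 + u2 x ^ 2 + u3 x ^ 2 = 1) :
    u1 φ * deriv u1 φ + u2 φ * deriv u2 φ + u3 φ * deriv u3 φ = 0 := by
  have hsum : HasDerivAt (fun x => u1 x ^ 2 + u2 x ^ 2 + u3 x ^ 2)
      (2 * (u1 φ * deriv u1 φ + u2 φ * deriv u2 φ + u3 φ * deriv u3 φ)) φ := by
    refine (((hd1.hasDerivAt.pow 2).add (hd2.hasDerivAt.pow 2)).add
      (hd3.hasDerivAt.pow 2)).congr_deriv ?_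
    norm_num
    ring
  have hconst : HasDerivAt (fun x => u1 x ^ 2 + u2 x ^ 2 + u3 x ^ 2) 0 φ :=
    (hasDerivAt_const φ (1 : ℝ)).congr_of_eventuallyEq hunit
  linarith [hsum.unique hconst]

lemma sq_le_mul_of_sum_sq_eq_one_of_inner_eq_zero {x y z a b c : ℝ}
    (hunit : x ^ 2 + y ^ 2 + z ^ 2 = 1) (horth : x * a + y * b + z * c = 0) :
    b ^ 2 ≤ (x ^ 2 + z ^ 2) * (a ^ 2 + b ^ 2 + c ^ 2) := by
  have hyb : y * b = -(x * a + z * c) := by linarith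
  have cauchy_schwarz : (y * b) ^ 2 ≤ (x ^ 2 + z ^ 2) * (a ^ 2 + c ^ 2) := by
    rw [hyb]
    nlinarith [sq_nonneg (x * c - z * a)]
  calc b ^ 2 = (x ^ 2 + z ^ 2) * b ^ 2 + (y * b) ^ 2 := by
        linear_combination (-b ^ 2) * hunit
    _ ≤ (x ^ 2 + z ^ 2) * b ^ 2 + (x ^ 2 + z ^ 2) * (a ^ 2 + c ^ 2) := by gcongr
    _ = (x ^ 2 + z ^ 2) * (a ^ 2 + b ^ 2 + c ^ 2) := by ring

lemma two_mul_abs_le_of_sq_le_mul {b p q s : ℝ} (hb : b ^ 2 ≤ p * q) (hp : 0 ≤ p) (hq : 0 ≤ q)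
    (hs : 0 < s) : 2 * |b| ≤ q * s + p / s := by
  have amgm : (q * s + p / s) ^ 2 = (q * s - p / s) ^ 2 + 4 * (p * q) := by
    field_simp
    ring
  refine (pow_le_pow_iff_left₀ (by positivity) (by positivity) two_ne_zero).1 ?_
  rw [mul_pow, sq_abs, amgm]
  nlinarith [sq_nonneg (q * s - p / s)]

lemma abs_le_of_sum_sq_eq_one_of_inner_eq_zero {x y z a b c s : ℝ}
    (hunit : x ^ 2 + y ^ 2 + z ^ 2 = 1) (horth : x * a + y * b + z * c = 0) (hs : 0 < s) :
    |b| ≤ (a ^ 2 + b ^ 2 + c ^ 2) * s + (4 * x ^ 2 + z ^ 2) / s := by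
  have hb := two_mul_abs_le_of_sq_le_mul (sq_le_mul_of_sum_sq_eq_one_of_inner_eq_zero hunit horth)
    (by positivity) (by positivity) hs
  have hweight : (x ^ 2 + z ^ 2) / s ≤ (4 * x ^ 2 + z ^ 2) / s := by
    gcongr
    nlinarith [sq_nonneg x]
  linarith [abs_nonneg b]

theorem u2_oscillation_bound_general (u1 u2 u3 : ℝ → ℝ)
    (hc2 : ContinuousOn u2 (Icc 0 π))
    (hd1 : ∀ φ ∈ Ioo (0 : ℝ) π, DifferentiableAt ℝ u1 φ)
    (hd2 : ∀ φ ∈ Ioo (0 : ℝ) π, DifferentiableAt ℝ u2 φ)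
    (hd3 : ∀ φ ∈ Ioo (0 : ℝ) π, DifferentiableAt ℝ u3 φ)
    (hunit : ∀ φ ∈ Icc (0 : ℝ) π, u1 φ ^ 2 + u2 φ ^ 2 + u3 φ ^ 2 = 1)
    (e2 : ℝ → ℝ)
    (he2 : e2 = fun φ =>
      ((deriv u1 φ) ^ 2 + (deriv u2 φ) ^ 2 + (deriv u3 φ) ^ 2) * Real.sin φ
        + (4 * u1 φ ^ 2 + u3 φ ^ 2) / Real.sin φ)
    (hint : IntervalIntegrable e2 volume 0 π) :
    ∀ φ1 φ2 : ℝ, 0 ≤ φ1 → φ1 < φ2 → φ2 ≤ π →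
      |u2 φ2 - u2 φ1| ≤ ∫ t in φ1..φ2, e2 t := by
  intro φ1 φ2 h1 h12 h2
  have hpointwise : ∀ φ ∈ Ioo (0 : ℝ) π, |deriv u2 φ| ≤ e2 φ := fun φ hφ => by
    have horth := inner_deriv_eq_zero_of_sum_sq_eventually_eq_one (hd1 φ hφ) (hd2 φ hφ)
      (hd3 φ hφ) (Filter.mem_of_superset (Ioo_mem_nhds hφ.1 hφ.2)
        fun x hx => hunit x (Ioo_subset_Icc_self hx))
    rw [he2]
    exact abs_le_of_sum_sq_eq_one_of_inner_eq_zero (hunit φ (Ioo_subset_Icc_self hφ)) horth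
      (sin_pos_of_pos_of_lt_pi hφ.1 hφ.2)
  have hIcc : Icc φ1 φ2 ⊆ Icc 0 π := Icc_subset_Icc h1 h2
  have hIoo : Ioo φ1 φ2 ⊆ Ioo 0 π := Ioo_subset_Ioo h1 h2
  have hint' : IntegrableOn e2 (Icc φ1 φ2) := by
    refine (intervalIntegrable_iff_integrableOn_Icc_of_le h12.le).1 (hint.mono_set ?_)
    rwa [uIcc_of_le h12.le, uIcc_of_le (by linarith)]
  exact abs_sub_le_integral_of_abs_deriv_le h12.le (hc2.mono hIcc)
    (fun x hx => hd2 x (hIoo hx)) hint'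
    fun x hx => hpointwise x (hIoo hx)

/-- For u : [0,π] → S² absolutely continuous with finite energy
    E₂[u] = ∫₀^π e₂[u], one has |u2(φ2) - u2(φ1)| ≤ ∫_{φ1}^{φ2} e₂[u]
    for all 0 ≤ φ1 < φ2 ≤ π. -/
theorem u2_oscillation_bound (u1 u2 u3 : ℝ → ℝ)
    (hc1 : ContinuousOn u1 (Icc 0 π)) (hc2 : ContinuousOn u2 (Icc 0 π))
    (hc3 : ContinuousOn u3 (Icc 0 π))
    (hd1 : ∀ φ ∈ Ioo (0 : ℝ) π, DifferentiableAt ℝ u1 φ)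
    (hd2 : ∀ φ ∈ Ioo (0 : ℝ) π, DifferentiableAt ℝ u2 φ)
    (hd3 : ∀ φ ∈ Ioo (0 : ℝ) π, DifferentiableAt ℝ u3 φ)
    (hunit : ∀ φ ∈ Icc (0 : ℝ) π, u1 φ ^ 2 + u2 φ ^ 2 + u3 φ ^ 2 = 1)
    (e2 : ℝ → ℝ)
    (he2 : e2 = fun φ =>
      ((deriv u1 φ) ^ 2 + (deriv u2 φ) ^ 2 + (deriv u3 φ) ^ 2) * Real.sin φ
        + (4 * u1 φ ^ 2 + u3 φ ^ 2) / Real.sin φ)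
    (hint : IntervalIntegrable e2 volume 0 π) :
    ∀ φ1 φ2 : ℝ, 0 ≤ φ1 → φ1 < φ2 → φ2 ≤ π →
      |u2 φ2 - u2 φ1| ≤ ∫ t in φ1..φ2, e2 t :=
  u2_oscillation_bound_general u1 u2 u3 hc2 hd1 hd2 hd3 hunit e2 he2 hint
end

section
/- Suppose v : [0,π] → S² solves the ODE system -(sin φ v')' + (1/sinφ)(4v1,0,v3)ᵀ = (|v'|²sinφ + (4v1²+v3²)/sinφ)v, is smooth on [0,π], satisfies v1(π-φ) = v1(φ), v2(π-φ) = v2(φ), v3(π-φ) = -v3(φ), v1 ≥ 0 and v3 ≥ 0 on [0,π/2], and v1 = v3 = 0 at φ = 0. If v1(φ0) = 0 for some φ0 ∈ (0,π/2), then v1 ≡ 0 on [0,π]. -/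
open Real Set
open scoped ContDiff

/-- For a smooth S²-valued solution v of the ODE system on (0,π) with the stated symmetry
    and sign conditions and v1(0) = v3(0) = 0: if v1 vanishes at some φ0 ∈ (0,π/2),
    then v1 vanishes identically on [0,π]. -/
theorem v1_identically_zero (v1 v2 v3 : ℝ → ℝ)
    (hv1 : ContDiffOn ℝ (⊤ : ℕ∞) v1 (Icc 0 π)) (hv2 : ContDiffOn ℝ (⊤ : ℕ∞) v2 (Icc 0 π))
    (hv3 : ContDiffOn ℝ (⊤ : ℕ∞) v3 (Icc 0 π))
    (hunit : ∀ φ ∈ Icc (0 : ℝ) π, v1 φ ^ 2 + v2 φ ^ 2 + v3 φ ^ 2 = 1)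
    (hODE1 : ∀ φ ∈ Ioo (0 : ℝ) π,
      -(deriv (fun x => Real.sin x * deriv v1 x) φ) + (4 / Real.sin φ) * v1 φ =
        (((deriv v1 φ) ^ 2 + (deriv v2 φ) ^ 2 + (deriv v3 φ) ^ 2) * Real.sin φ
          + (4 * v1 φ ^ 2 + v3 φ ^ 2) / Real.sin φ) * v1 φ)
    (hODE2 : ∀ φ ∈ Ioo (0 : ℝ) π,
      -(deriv (fun x => Real.sin x * deriv v2 x) φ) =
        (((deriv v1 φ) ^ 2 + (deriv v2 φ) ^ 2 + (deriv v3 φ) ^ 2) * Real.sin φ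
          + (4 * v1 φ ^ 2 + v3 φ ^ 2) / Real.sin φ) * v2 φ)
    (hODE3 : ∀ φ ∈ Ioo (0 : ℝ) π,
      -(deriv (fun x => Real.sin x * deriv v3 x) φ) + (1 / Real.sin φ) * v3 φ =
        (((deriv v1 φ) ^ 2 + (deriv v2 φ) ^ 2 + (deriv v3 φ) ^ 2) * Real.sin φ
          + (4 * v1 φ ^ 2 + v3 φ ^ 2) / Real.sin φ) * v3 φ)
    (hsym1 : ∀ φ ∈ Icc (0 : ℝ) π, v1 (π - φ) = v1 φ)
    (hsym2 : ∀ φ ∈ Icc (0 : ℝ) π, v2 (π - φ) = v2 φ)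
    (hsym3 : ∀ φ ∈ Icc (0 : ℝ) π, v3 (π - φ) = -v3 φ)
    (hsign1 : ∀ φ ∈ Icc (0 : ℝ) (π / 2), 0 ≤ v1 φ)
    (hsign3 : ∀ φ ∈ Icc (0 : ℝ) (π / 2), 0 ≤ v3 φ)
    (hbc1 : v1 0 = 0) (hbc3 : v3 0 = 0)
    (φ0 : ℝ) (hφ0 : φ0 ∈ Ioo (0 : ℝ) (π / 2)) (hzero : v1 φ0 = 0) :
    ∀ φ ∈ Icc (0 : ℝ) π, v1 φ = 0 := by
  have hπ := Real.pi_pos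
  have hsinpos : ∀ t ∈ Ioo (0:ℝ) π, 0 < Real.sin t := fun t ht =>
    Real.sin_pos_of_pos_of_lt_pi ht.1 ht.2
  -- smoothness of derivatives on the open interval
  have hv1' : ContDiffOn ℝ ∞ v1 (Ioo 0 π) :=
    (hv1.of_le (by simp)).mono Ioo_subset_Icc_self
  have hd1 : ContDiffOn ℝ ∞ (deriv v1) (Ioo 0 π) :=
    ((contDiffOn_infty_iff_deriv_of_isOpen isOpen_Ioo).1 hv1').2
  have hd2 : ContDiffOn ℝ ∞ (deriv v2) (Ioo 0 π) :=
    ((contDiffOn_infty_iff_deriv_of_isOpen isOpen_Ioo).1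
      ((hv2.of_le (by simp)).mono Ioo_subset_Icc_self)).2
  have hd3 : ContDiffOn ℝ ∞ (deriv v3) (Ioo 0 π) :=
    ((contDiffOn_infty_iff_deriv_of_isOpen isOpen_Ioo).1
      ((hv3.of_le (by simp)).mono Ioo_subset_Icc_self)).2
  have hdv1 : DifferentiableOn ℝ v1 (Ioo 0 π) := hv1'.differentiableOn (by simp)
  have hddv1 : DifferentiableOn ℝ (deriv v1) (Ioo 0 π) := hd1.differentiableOn (by simp)
  -- φ0 is an interior minimum of v1, so deriv v1 φ0 = 0
  have hder0 : deriv v1 φ0 = 0 := by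
    have hmin : IsLocalMin v1 φ0 := by
      have hnb : Icc (0:ℝ) (π/2) ∈ nhds φ0 := Icc_mem_nhds hφ0.1 hφ0.2
      filter_upwards [hnb] with x hx
      rw [hzero]
      exact hsign1 x hx
    exact hmin.deriv_eq_zero
  have hφ0' : φ0 ∈ Ioo (0:ℝ) π := ⟨hφ0.1, by linarith [hφ0.2]⟩
  -- main step: v1 vanishes on the open interval
  have key : ∀ ψ ∈ Ioo (0:ℝ) π, v1 ψ = 0 := by
    intro ψ hψ
    set a : ℝ := min φ0 ψ / 2 with ha_def
    set b : ℝ := (max φ0 ψ + π) / 2 with hb_def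
    have hmin_pos : 0 < min φ0 ψ := lt_min hφ0'.1 hψ.1
    have hmax_lt : max φ0 ψ < π := max_lt hφ0'.2 hψ.2
    have ha0 : 0 < a := by positivity
    have hbπ : b < π := by simp only [hb_def]; linarith
    have haφ0 : a < φ0 := by
      have := min_le_left φ0 ψ; simp only [ha_def]; linarith
    have haψ : a < ψ := by
      have := min_le_right φ0 ψ; simp only [ha_def]; linarith
    have hφ0b : φ0 < b := by
      have := le_max_left φ0 ψ; simp only [hb_def]; linarith
    have hψb : ψ < b := by
      have := le_max_right φ0 ψ; simp only [hb_def]; linarith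
    have hsub : Icc a b ⊆ Ioo 0 π := fun t ht => ⟨lt_of_lt_of_le ha0 ht.1, lt_of_le_of_lt ht.2 hbπ⟩
    have hsinne : ∀ t ∈ Icc a b, Real.sin t ≠ 0 := fun t ht => (hsinpos t (hsub ht)).ne'
    -- coefficient functions
    set Q : ℝ → ℝ := fun t => ((deriv v1 t) ^ 2 + (deriv v2 t) ^ 2 + (deriv v3 t) ^ 2)
        * Real.sin t + (4 * v1 t ^ 2 + v3 t ^ 2) / Real.sin t with hQ_def
    set c : ℝ → ℝ := fun t => 4 / Real.sin t - Q t with hc_def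
    set α : ℝ → ℝ := fun t => 1 / Real.sin t with hα_def
    -- continuity of the coefficients on [a,b]
    have hsinC : ContinuousOn Real.sin (Icc a b) := Real.continuous_sin.continuousOn
    have hQC : ContinuousOn Q (Icc a b) := by
      refine ContinuousOn.add (ContinuousOn.mul ?_ hsinC) (ContinuousOn.div ?_ hsinC hsinne)
      · exact (((hd1.continuousOn.mono hsub).pow 2).add
          ((hd2.continuousOn.mono hsub).pow 2)).add ((hd3.continuousOn.mono hsub).pow 2)
      · exact (continuousOn_const.mul
          ((hv1.continuousOn.mono (hsub.trans Ioo_subset_Icc_self)).pow 2)).add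
          ((hv3.continuousOn.mono (hsub.trans Ioo_subset_Icc_self)).pow 2)
    have hpairC : ContinuousOn (fun t => (α t, c t)) (Icc a b) :=
      (continuousOn_const.div hsinC hsinne).prodMk
        ((continuousOn_const.div hsinC hsinne).sub hQC)
    obtain ⟨C, hC⟩ := isCompact_Icc.exists_bound_of_continuousOn hpairC
    set K : NNReal := Real.toNNReal C with hK_def
    have hKα : ∀ t ∈ Icc a b, |α t| ≤ (K : ℝ) := by
      intro t ht
      calc |α t| = ‖(α t, c t).1‖ := rfl
        _ ≤ ‖(α t, c t)‖ := norm_fst_le _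
        _ ≤ C := hC t ht
        _ ≤ (K : ℝ) := by rw [hK_def, Real.coe_toNNReal']; exact le_max_left _ _
    have hKc : ∀ t ∈ Icc a b, |c t| ≤ (K : ℝ) := by
      intro t ht
      calc |c t| = ‖(α t, c t).2‖ := rfl
        _ ≤ ‖(α t, c t)‖ := norm_snd_le _
        _ ≤ C := hC t ht
        _ ≤ (K : ℝ) := by rw [hK_def, Real.coe_toNNReal']; exact le_max_left _ _
    -- the vector field
    set F : ℝ → ℝ × ℝ → ℝ × ℝ :=
      fun t p => if t ∈ Icc a b then (α t * p.2, c t * p.1) else 0 with hF_def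
    have hlip : ∀ t, LipschitzWith K (F t) := by
      intro t
      by_cases ht : t ∈ Icc a b
      · refine LipschitzWith.of_dist_le_mul fun p q => ?_
        simp only [hF_def, if_pos ht]
        rw [Prod.dist_eq]
        have h1 : dist (α t * p.2) (α t * q.2) ≤ (K : ℝ) * dist p q := by
          rw [Real.dist_eq, show α t * p.2 - α t * q.2 = α t * (p.2 - q.2) by ring, abs_mul]
          exact mul_le_mul (hKα t ht) (by rw [← Real.dist_eq]; exact le_max_right _ _ |>.trans_eq (Prod.dist_eq (x := p) (y := q)).symm)
            (abs_nonneg _) K.coe_nonneg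
        have h2 : dist (c t * p.1) (c t * q.1) ≤ (K : ℝ) * dist p q := by
          rw [Real.dist_eq, show c t * p.1 - c t * q.1 = c t * (p.1 - q.1) by ring, abs_mul]
          exact mul_le_mul (hKc t ht) (by rw [← Real.dist_eq]; exact le_max_left _ _ |>.trans_eq (Prod.dist_eq (x := p) (y := q)).symm)
            (abs_nonneg _) K.coe_nonneg
        exact max_le h1 h2
      · simp only [hF_def, if_neg ht]
        exact (LipschitzWith.const (0 : ℝ × ℝ)).weaken (by positivity)
    -- the solution and the zero solution
    set f : ℝ → ℝ × ℝ := fun t => (v1 t, Real.sin t * deriv v1 t) with hf_def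
    set g : ℝ → ℝ × ℝ := fun _ => ((0:ℝ), (0:ℝ)) with hg_def
    have hf' : ∀ t ∈ Ioo a b, HasDerivAt f (F t (f t)) t := by
      intro t ht
      have ht' : t ∈ Ioo 0 π := hsub (Ioo_subset_Icc_self ht)
      have htab : t ∈ Icc a b := Ioo_subset_Icc_self ht
      have hmem : Ioo (0:ℝ) π ∈ nhds t := isOpen_Ioo.mem_nhds ht'
      have hda : DifferentiableAt ℝ v1 t := hdv1.differentiableAt hmem
      have hdda : DifferentiableAt ℝ (fun x => Real.sin x * deriv v1 x) t :=
        Real.differentiable_sin.differentiableAt.mul (hddv1.differentiableAt hmem)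
      have hDode : deriv (fun x => Real.sin x * deriv v1 x) t = c t * v1 t := by
        have h := hODE1 t ht'
        have hexp : c t * v1 t = 4 / Real.sin t * v1 t - Q t * v1 t := by
          simp only [hc_def]; ring
        rw [hexp]
        linarith
      have h1 : HasDerivAt v1 (deriv v1 t) t := hda.hasDerivAt
      have h2 : HasDerivAt (fun x => Real.sin x * deriv v1 x) (c t * v1 t) t := by
        rw [← hDode]; exact hdda.hasDerivAt
      have hcomb : HasDerivAt f (deriv v1 t, c t * v1 t) t := h1.prodMk h2
      have heqF : F t (f t) = (deriv v1 t, c t * v1 t) := by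
        simp only [hF_def, hf_def, if_pos htab]
        congr 1
        simp only [hα_def]
        field_simp
        exact mul_div_cancel_left₀ _ (hsinne t htab)
      rw [heqF]
      exact hcomb
    have hg' : ∀ t ∈ Ioo a b, HasDerivAt g (F t (g t)) t := by
      intro t ht
      have hF0 : F t (g t) = ((0:ℝ), (0:ℝ)) := by
        simp only [hF_def, hg_def]
        split_ifs <;> simp [Prod.ext_iff]
      rw [hF0]
      exact hasDerivAt_const t _
    have hfc : ContinuousOn f (Icc a b) :=
      (hv1.continuousOn.mono (hsub.trans Ioo_subset_Icc_self)).prodMk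
        (hsinC.mul (hd1.continuousOn.mono hsub))
    have hgc : ContinuousOn g (Icc a b) := continuousOn_const
    have heq0 : f φ0 = g φ0 := by
      simp only [hf_def, hg_def, hzero, hder0, Prod.ext_iff]
      constructor <;> simp [hzero, hder0]
    have huniq := ODE_solution_unique_of_mem_Icc (v := F) (s := fun _ => (univ : Set (ℝ × ℝ)))
      (fun t _ => (hlip t).lipschitzOnWith) ⟨haφ0, hφ0b⟩ hfc hf' (fun _ _ => mem_univ _)
      hgc hg' (fun _ _ => mem_univ _) heq0
    have h2 : f ψ = g ψ := huniq ⟨le_of_lt haψ, le_of_lt hψb⟩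
    rw [hf_def, hg_def] at h2
    simpa using congrArg Prod.fst h2
  -- conclude on the closed interval
  intro φ hφ
  rcases eq_or_lt_of_le hφ.1 with h0 | h0
  · rw [← h0]; exact hbc1
  rcases eq_or_lt_of_le hφ.2 with hπe | hπl
  · have := hsym1 0 ⟨le_refl 0, le_of_lt hπ⟩
    rw [sub_zero] at this
    rw [hπe, this, hbc1]
  · exact key φ ⟨h0, hπl⟩
end
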